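/- arXiv:1212.3940 — 2 statements merged into one kernel-verified Lean document; each statement's English description precedes it below -/
import Mathlib

section
/- Let G be a simple connected vertex-transitive graph of odd order with vertex degree k ≥ 4 and girth greater than 3. Then for every vertex subset S with |S| ≥ 2 and |V(G) \ S| ≥ 2, the number d(S) of edges with exactly one end in S satisfies d(S) ≥ 2k − 2. -/
open SimpleGraph

/-- The set of edges of `G` with exactly one end in `S`. -/
def edgeBoundary {V : Type*} (G : SimpleGraph V) (S : Set V) : Set (Sym2 V) :=
  {e | e ∈ G.edgeSet ∧ ∃ x ∈ S, ∃ y ∉ S, e = s(x, y)}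

/-! Among the sets `A` with `|A| ≥ 2` and `|Aᶜ| ≥ 2` that minimise `d`, take a smallest one.
Submodularity and posimodularity of `d` force two such sets of size at least 3 to coincide as
soon as they meet, so an automorphism mapping a vertex of `A` into `A` fixes `A`. By
vertex-transitivity every vertex of `A` then has the same number `r` of neighbours in `A`, and
`d(A) = |A| (k - r)`. Connectivity gives `r < k` and triangle-freeness gives `2r ≤ |A|`, whence
`d(A) ≥ 2k - 2`; if `|A| = 2`, each vertex of `A` already sends `k - 1` edges out. -/

open Finset

namespace SimpleGraph

variable {V : Type*} (G : SimpleGraph V)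

lemma cliqueFree_three_of_three_lt_girth (h : 3 < G.girth) : G.CliqueFree 3 := by
  classical
  intro s hs
  obtain ⟨x, y, z, hxy, hxz, hyz, rfl⟩ := is3Clique_iff.mp hs
  let w : G.Walk x x := .cons hxy (.cons hyz (.cons hxz.symm .nil))
  have hw : w.IsCycle := by
    simp [w, Walk.isCycle_def, hxy.ne, hyz.ne, hxz.ne, hxy.ne', hxz.ne']
  have := girth_le_length hw
  simp only [w, Walk.length_cons, Walk.length_nil] at this
  omega

lemma isRegularOfDegree_of_ncard_neighborSet [Fintype V] [DecidableRel G.Adj] {k : ℕ}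
    (h : ∀ v, (G.neighborSet v).ncard = k) : G.IsRegularOfDegree k := fun v => by
  rw [← card_neighborSet_eq_degree, ← h v, Set.ncard_eq_toFinset_card', Set.toFinset_card]

section Cut

variable [Fintype V] [DecidableEq V] [DecidableRel G.Adj]

def cutSize (S : Finset V) : ℕ := #(G.interedges S Sᶜ)

lemma cutSize_compl (S : Finset V) : G.cutSize Sᶜ = G.cutSize S := by
  have := G.symm
  rw [cutSize, compl_compl]
  exact Rel.card_interedges_comm _ _

lemma cutSize_inter_add_cutSize_union_le (A B : Finset V) :
    G.cutSize (A ∩ B) + G.cutSize (A ∪ B) ≤ G.cutSize A + G.cutSize B := by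
  simp only [cutSize]
  rw [← card_union_add_card_inter (G.interedges (A ∩ B) _),
    ← card_union_add_card_inter (G.interedges A _)]
  refine add_le_add (card_le_card fun p => ?_) (card_le_card fun p => ?_) <;>
    simp only [mem_union, mem_inter, mem_interedges_iff, mem_compl] <;> tauto

lemma cutSize_sdiff_add_cutSize_sdiff_le (A B : Finset V) :
    G.cutSize (A \ B) + G.cutSize (B \ A) ≤ G.cutSize A + G.cutSize B := by
  have hBA : B \ A = (A ∪ Bᶜ)ᶜ := by
    rw [compl_union, compl_compl, sdiff_eq, inter_comm, inf_eq_inter]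
  rw [sdiff_eq, hBA, cutSize_compl, ← G.cutSize_compl B]
  exact G.cutSize_inter_add_cutSize_union_le A Bᶜ

lemma cutSize_eq_sum (S : Finset V) : G.cutSize S = ∑ x ∈ S, #(G.neighborFinset x \ S) := by
  rw [cutSize, interedges_def, card_filter, sum_product]
  refine sum_congr rfl fun x _ => ?_
  rw [← card_filter]
  congr 1
  ext y
  simp [and_comm]

lemma Iso.image_neighborFinset (φ : G ≃g G) (x : V) :
    (G.neighborFinset x).image φ = G.neighborFinset (φ x) := by
  ext z
  simp only [mem_image, mem_neighborFinset]
  refine ⟨fun ⟨y, hy, hyz⟩ => hyz ▸ φ.map_adj_iff.mpr hy, fun h => ⟨φ.symm z, ?_, by simp⟩⟩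
  rwa [← φ.map_adj_iff, φ.apply_symm_apply]

lemma cutSize_image_iso (φ : G ≃g G) (S : Finset V) : G.cutSize (S.image φ) = G.cutSize S := by
  rw [cutSize_eq_sum, cutSize_eq_sum, sum_image fun x _ y _ h => φ.injective h]
  refine sum_congr rfl fun x _ => ?_
  rw [← Iso.image_neighborFinset, ← image_sdiff _ _ φ.injective,
    card_image_of_injective _ φ.injective]

lemma cutSize_pos (hG : G.Connected) {S : Finset V} (hS : S.Nonempty) (hSc : Sᶜ.Nonempty) :
    0 < G.cutSize S := by
  obtain ⟨x, hx⟩ := hS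
  obtain ⟨y, hy⟩ := hSc
  obtain ⟨d, -, hdx, hdy⟩ := (hG x y).some.exists_boundary_dart S hx (by simpa using hy)
  exact card_pos.mpr ⟨d.toProd, (G.mem_interedges_iff).mpr ⟨hdx, by simpa using hdy, d.adj⟩⟩

variable {G} {k : ℕ}

lemma IsRegularOfDegree.cutSize_eq_sum_sub (hG : G.IsRegularOfDegree k) (S : Finset V) :
    G.cutSize S = ∑ x ∈ S, (k - #(G.neighborFinset x ∩ S)) := by
  rw [cutSize_eq_sum]
  refine sum_congr rfl fun x _ => ?_
  rw [← hG.degree_eq x, ← card_neighborFinset_eq_degree,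
    ← card_inter_add_card_sdiff (G.neighborFinset x) S, Nat.add_sub_cancel_left]

lemma IsRegularOfDegree.card_mul_le_cutSize (hG : G.IsRegularOfDegree k) (S : Finset V) :
    #S * (k + 1 - #S) ≤ G.cutSize S := by
  rw [hG.cutSize_eq_sum_sub, ← smul_eq_mul, ← sum_const]
  refine sum_le_sum fun x hx => ?_
  have : #(G.neighborFinset x ∩ S) ≤ #(S.erase x) :=
    card_le_card fun y hy => by
      simp only [mem_inter, mem_neighborFinset] at hy
      exact mem_erase.mpr ⟨hy.1.ne', hy.2⟩
  rw [card_erase_of_mem hx] at this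
  have := card_pos.mpr ⟨x, hx⟩
  omega

lemma CliqueFree.card_neighborFinset_inter_add_le (hG : G.CliqueFree 3) {x y : V}
    (hxy : G.Adj x y) (A : Finset V) :
    #(G.neighborFinset x ∩ A) + #(G.neighborFinset y ∩ A) ≤ #A := by
  rw [← card_union_of_disjoint]
  · exact card_le_card (union_subset inter_subset_right inter_subset_right)
  · refine Finset.disjoint_left.mpr fun z hzx hzy => hG {x, y, z} (is3Clique_triple_iff.mpr ?_)
    simp only [mem_inter, mem_neighborFinset] at hzx hzy
    exact ⟨hxy, hzx.1, hzy.1⟩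

end Cut

section Atom

variable [Fintype V] [DecidableEq V] [DecidableRel G.Adj]

def IsRestricted (S : Finset V) : Prop := 2 ≤ #S ∧ 2 ≤ #Sᶜ

def IsRestrictedFragment (S : Finset V) : Prop :=
  IsRestricted S ∧ ∀ T, IsRestricted T → G.cutSize S ≤ G.cutSize T

def IsRestrictedAtom (A : Finset V) : Prop :=
  G.IsRestrictedFragment A ∧ ∀ T, G.IsRestrictedFragment T → #A ≤ #T

variable {G} {S T A B : Finset V}

lemma IsRestricted.compl (h : IsRestricted S) : IsRestricted Sᶜ :=
  ⟨h.2, by rw [compl_compl]; exact h.1⟩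

lemma IsRestrictedFragment.compl (h : G.IsRestrictedFragment S) : G.IsRestrictedFragment Sᶜ :=
  ⟨h.1.compl, fun T hT => G.cutSize_compl S ▸ h.2 T hT⟩

lemma IsRestrictedFragment.cutSize_eq (hS : G.IsRestrictedFragment S)
    (hT : G.IsRestrictedFragment T) : G.cutSize S = G.cutSize T :=
  le_antisymm (hS.2 T hT.1) (hT.2 S hS.1)

lemma IsRestrictedFragment.of_cutSize_le (hS : G.IsRestrictedFragment S) (hT : IsRestricted T)
    (h : G.cutSize T ≤ G.cutSize S) : G.IsRestrictedFragment T :=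
  ⟨hT, fun U hU => h.trans (hS.2 U hU)⟩

lemma IsRestrictedFragment.image_iso (hS : G.IsRestrictedFragment S) (φ : G ≃g G) :
    G.IsRestrictedFragment (S.image φ) := by
  have hcard : #(S.image φ) = #S := card_image_of_injective _ φ.injective
  refine hS.of_cutSize_le ⟨hcard ▸ hS.1.1, ?_⟩ (G.cutSize_image_iso φ S).le
  rw [card_compl, hcard, ← card_compl]
  exact hS.1.2

variable (G) in
lemma exists_isRestrictedAtom (h : ∃ S : Finset V, IsRestricted S) :
    ∃ A, G.IsRestrictedAtom A := by
  classical
  obtain ⟨S, hS⟩ := h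
  obtain ⟨M, hM, hMmin⟩ := (univ.filter IsRestricted).exists_min_image G.cutSize
    ⟨S, mem_filter.mpr ⟨mem_univ S, hS⟩⟩
  have hMfrag : G.IsRestrictedFragment M :=
    ⟨(mem_filter.mp hM).2, fun T hT => hMmin T (mem_filter.mpr ⟨mem_univ T, hT⟩)⟩
  obtain ⟨A, hA, hAmin⟩ := (univ.filter G.IsRestrictedFragment).exists_min_image card
    ⟨M, mem_filter.mpr ⟨mem_univ M, hMfrag⟩⟩
  exact ⟨A, (mem_filter.mp hA).2, fun T hT => hAmin T (mem_filter.mpr ⟨mem_univ T, hT⟩)⟩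

lemma IsRestrictedAtom.two_mul_card_le (hA : G.IsRestrictedAtom A) :
    2 * #A ≤ Fintype.card V := by
  have := hA.2 _ hA.1.compl
  have := card_add_card_compl A
  omega

lemma IsRestrictedAtom.subset_of_two_le_card_inter (hA : G.IsRestrictedAtom A)
    (hB : G.IsRestrictedFragment B) (hcard : #A + #B ≤ Fintype.card V)
    (h : 2 ≤ #(A ∩ B)) : A ⊆ B := by
  have hI : IsRestricted (A ∩ B) :=
    ⟨h, hA.1.1.2.trans (card_le_card (compl_subset_compl.mpr inter_subset_left))⟩
  have hU : IsRestricted (A ∪ B) := by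
    refine ⟨hA.1.1.1.trans (card_le_card subset_union_left), ?_⟩
    have := card_union_add_card_inter A B
    have := card_add_card_compl (A ∪ B)
    omega
  have hIfrag : G.IsRestrictedFragment (A ∩ B) := by
    refine hA.1.of_cutSize_le hI ?_
    have := G.cutSize_inter_add_cutSize_union_le A B
    have := hA.1.2 _ hU
    have := hA.1.cutSize_eq hB
    omega
  rw [← eq_of_subset_of_card_le inter_subset_left (hA.2 _ hIfrag)]
  exact inter_subset_right

lemma IsRestrictedAtom.card_inter_ne_one (hA : G.IsRestrictedAtom A)
    (hB : G.IsRestrictedFragment B) (hA3 : 3 ≤ #A) (hB3 : 3 ≤ #B) : #(A ∩ B) ≠ 1 := by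
  intro h1
  have hAB := card_sdiff_add_card_inter A B
  have hBA := card_sdiff_add_card_inter B A
  rw [inter_comm] at hBA
  have hsdiff {X Y : Finset V} : Y ⊆ (X \ Y)ᶜ := fun y hy =>
    mem_compl.mpr fun h => (mem_sdiff.mp h).2 hy
  have hR₁ : IsRestricted (A \ B) := ⟨by omega, hB.1.1.trans (card_le_card hsdiff)⟩
  have hR₂ : IsRestricted (B \ A) := ⟨by omega, hA.1.1.1.trans (card_le_card hsdiff)⟩
  have hfrag : G.IsRestrictedFragment (A \ B) := by
    refine hA.1.of_cutSize_le hR₁ ?_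
    have := G.cutSize_sdiff_add_cutSize_sdiff_le A B
    have := hA.1.2 _ hR₂
    have := hA.1.cutSize_eq hB
    omega
  have := hA.2 _ hfrag
  omega

lemma IsRestrictedAtom.eq_of_inter_nonempty (hA : G.IsRestrictedAtom A) (hA3 : 3 ≤ #A)
    (hB : G.IsRestrictedFragment B) (hcard : #B = #A) (hAB : (A ∩ B).Nonempty) : A = B := by
  have h2 : 2 ≤ #(A ∩ B) := by
    have := card_pos.mpr hAB
    have := hA.card_inter_ne_one hB hA3 (hcard ▸ hA3)
    omega
  have hsub := hA.subset_of_two_le_card_inter hB (by have := hA.two_mul_card_le; omega) h2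
  exact eq_of_subset_of_card_le hsub hcard.le

lemma IsRestrictedAtom.card_neighborFinset_inter_eq (hA : G.IsRestrictedAtom A) (hA3 : 3 ≤ #A)
    (hvt : ∀ x y : V, ∃ φ : G ≃g G, φ x = y) {x y : V} (hx : x ∈ A) (hy : y ∈ A) :
    #(G.neighborFinset x ∩ A) = #(G.neighborFinset y ∩ A) := by
  obtain ⟨φ, rfl⟩ := hvt x y
  have hφA : A = A.image φ :=
    hA.eq_of_inter_nonempty hA3 (hA.1.image_iso φ) (card_image_of_injective _ φ.injective)
      ⟨φ x, mem_inter.mpr ⟨hy, mem_image_of_mem φ hx⟩⟩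
  calc #(G.neighborFinset x ∩ A) = #((G.neighborFinset x ∩ A).image φ) :=
        (card_image_of_injective _ φ.injective).symm
    _ = #(G.neighborFinset (φ x) ∩ A) := by
        rw [image_inter _ _ φ.injective, Iso.image_neighborFinset, ← hφA]

variable {k : ℕ}

lemma IsRestrictedAtom.two_mul_sub_two_le_cutSize (hA : G.IsRestrictedAtom A)
    (hconn : G.Connected) (hvt : ∀ x y : V, ∃ φ : G ≃g G, φ x = y)
    (hreg : G.IsRegularOfDegree k) (htri : G.CliqueFree 3) : 2 * k - 2 ≤ G.cutSize A := by
  rcases hA.1.1.1.eq_or_lt with h2 | hA3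
  · have := hreg.card_mul_le_cutSize A
    rw [← h2] at this
    omega
  obtain ⟨x, hx⟩ : A.Nonempty := card_pos.mp (by omega)
  set r := #(G.neighborFinset x ∩ A)
  have hcut : G.cutSize A = #A * (k - r) := by
    rw [hreg.cutSize_eq_sum_sub, sum_const_nat fun y hy => by
      rw [hA.card_neighborFinset_inter_eq hA3 hvt hy hx]]
  have hrk : r < k := by
    have := G.cutSize_pos hconn ⟨x, hx⟩ (card_pos.mp (by have := hA.1.1.2; omega))
    rw [hcut] at this
    have := Nat.pos_of_mul_pos_left this
    omega
  obtain ⟨d, rfl⟩ : ∃ d, k = r + d + 1 := ⟨k - r - 1, by omega⟩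
  rw [hcut, show r + d + 1 - r = d + 1 by omega,
    show 2 * (r + d + 1) - 2 = 2 * (r + d) by omega]
  rcases Nat.eq_zero_or_pos r with hr0 | hr1
  · rw [hr0]
    nlinarith
  · obtain ⟨y, hy⟩ := card_pos.mp hr1
    rw [mem_inter, mem_neighborFinset] at hy
    have h2r := htri.card_neighborFinset_inter_add_le hy.1 A
    rw [hA.card_neighborFinset_inter_eq hA3 hvt hy.2 hx] at h2r
    nlinarith [Nat.mul_le_mul_right (d + 1) h2r, Nat.mul_le_mul_right d hr1]

end Atom

end SimpleGraph

lemma ncard_edgeBoundary {V : Type*} [Fintype V] [DecidableEq V] (G : SimpleGraph V)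
    [DecidableRel G.Adj] (S : Set V) [DecidablePred (· ∈ S)] :
    (edgeBoundary G S).ncard = G.cutSize S.toFinset := by
  set E := G.interedges S.toFinset S.toFinsetᶜ
  have himg : edgeBoundary G S = (fun p : V × V => s(p.1, p.2)) '' E := by
    ext e
    simp only [edgeBoundary, E, Set.mem_ofPred_eq, Set.mem_image, mem_coe, mem_interedges_iff,
      mem_compl, Set.mem_toFinset, Prod.exists]
    constructor
    · rintro ⟨he, x, hx, y, hy, rfl⟩
      exact ⟨x, y, ⟨hx, hy, he⟩, rfl⟩
    · rintro ⟨x, y, ⟨hx, hy, hadj⟩, rfl⟩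
      exact ⟨hadj, x, hx, y, hy, rfl⟩
  have hinj : Set.InjOn (fun p : V × V => s(p.1, p.2)) E := by
    rintro ⟨x, y⟩ hxy ⟨x', y'⟩ hxy' heq
    simp only [E, mem_coe, mem_interedges_iff, mem_compl, Set.mem_toFinset] at hxy hxy'
    rcases Sym2.eq_iff.mp heq with ⟨rfl, rfl⟩ | ⟨rfl, rfl⟩
    · rfl
    · exact (hxy'.2.1 hxy.1).elim
  rw [himg, hinj.ncard_image, Set.ncard_coe_finset, cutSize]

theorem edge_boundary_lower_bound_general {V : Type*} [Fintype V] (G : SimpleGraph V) (k : ℕ)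
    (hconn : G.Connected)
    (hvt : ∀ x y : V, ∃ φ : G ≃g G, φ x = y)
    (hreg : ∀ v : V, (G.neighborSet v).ncard = k)
    (hgirth : 3 < G.girth) :
    ∀ S : Set V, 2 ≤ S.ncard → 2 ≤ Sᶜ.ncard →
      2 * k - 2 ≤ (edgeBoundary G S).ncard := by
  classical
  intro S hS hSc
  have hSr : IsRestricted S.toFinset := by
    rw [IsRestricted, ← Set.toFinset_compl, ← Set.ncard_eq_toFinset_card',
      ← Set.ncard_eq_toFinset_card']
    exact ⟨hS, hSc⟩
  obtain ⟨A, hA⟩ := exists_isRestrictedAtom G ⟨_, hSr⟩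
  rw [ncard_edgeBoundary]
  exact (hA.two_mul_sub_two_le_cutSize hconn hvt (G.isRegularOfDegree_of_ncard_neighborSet hreg)
    (G.cliqueFree_three_of_three_lt_girth hgirth)).trans (hA.1.2 _ hSr)

/-- In a connected vertex-transitive odd graph with degree `k ≥ 4` and girth greater than 3,
every vertex subset `S` with `|S| ≥ 2` and `|V \ S| ≥ 2` satisfies `d(S) ≥ 2k - 2`. -/
theorem edge_boundary_lower_bound {V : Type*} [Fintype V] (G : SimpleGraph V) (k : ℕ)
    (hconn : G.Connected)
    (hvt : ∀ x y : V, ∃ φ : G ≃g G, φ x = y)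
    (hodd : Odd (Fintype.card V))
    (hreg : ∀ v : V, (G.neighborSet v).ncard = k)
    (hk : 4 ≤ k)
    (hgirth : 3 < G.girth) :
    ∀ S : Set V, 2 ≤ S.ncard → 2 ≤ Sᶜ.ncard →
      2 * k - 2 ≤ (edgeBoundary G S).ncard :=
  edge_boundary_lower_bound_general G k hconn hvt hreg hgirth
end

section
/- Let G be a simple connected 4-regular vertex-transitive graph of odd order. Then there do not exist three pairwise distinct vertices x, y, z of G with N(x) = N(y) = N(z). -/
open SimpleGraph

/-! Being twins (`N(u) = N(v)`) is an equivalence relation whose classes all have the same size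
`k` in a vertex-transitive graph. Both the vertex set and the neighbourhood of a vertex are unions
of twin classes, so `k` divides the odd order and the degree `4`, forcing `k = 1`. -/

theorem Set.dvd_ncard_of_forall_ncard_fiber_eq {α β : Type*} {s : Set α} (hs : s.Finite)
    {f : α → β} {k : ℕ} (h : ∀ a ∈ s, {b ∈ s | f b = f a}.ncard = k) : k ∣ s.ncard := by
  classical
  lift s to Finset α using hs
  have hfiber : ∀ c ∈ s.image f, (s.filter (f · = c)).card = k := by
    simp only [Finset.mem_image]
    rintro _ ⟨a, ha, rfl⟩
    rw [← h a ha, ← Set.ncard_coe_finset, Finset.coe_filter]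
    rfl
  rw [Set.ncard_coe_finset, Finset.card_eq_sum_card_image f s, Finset.sum_const_nat hfiber]
  exact dvd_mul_left _ _

namespace SimpleGraph

variable {V : Type*} (G : SimpleGraph V)

def twins (v : V) : Set V := {w | G.neighborSet w = G.neighborSet v}

variable {G}

theorem Iso.image_twins (φ : G ≃g G) (v : V) : φ '' G.twins v = G.twins (φ v) := by
  ext w
  obtain ⟨u, rfl⟩ := φ.surjective w
  simp only [twins, Set.mem_ofPred_eq, φ.injective.mem_set_image, ← φ.image_neighborSet,
    Set.image_eq_image φ.injective]

theorem twins_subset_neighborSet {u v : V} (h : u ∈ G.neighborSet v) :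
    G.twins u ⊆ G.neighborSet v := by
  intro w hw
  have : G.Adj w v := by rw [← mem_neighborSet, hw]; exact h.symm
  exact this.symm

theorem ncard_twins_eq_of_forall_exists_iso (hvt : ∀ x y : V, ∃ φ : G ≃g G, φ x = y)
    (u v : V) : (G.twins u).ncard = (G.twins v).ncard := by
  obtain ⟨φ, rfl⟩ := hvt u v
  rw [← φ.image_twins, Set.ncard_image_of_injective _ φ.injective]

variable [Finite V] {k : ℕ}

theorem dvd_ncard_neighborSet_of_forall_ncard_twins_eq (hk : ∀ u, (G.twins u).ncard = k) (v : V) :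
    k ∣ (G.neighborSet v).ncard := by
  refine Set.dvd_ncard_of_forall_ncard_fiber_eq (f := G.neighborSet) (Set.toFinite _)
    fun u hu ↦ ?_
  change {b ∈ G.neighborSet v | b ∈ G.twins u}.ncard = k
  rw [Set.sep_eq_of_subset (twins_subset_neighborSet hu), hk u]

theorem dvd_card_of_forall_ncard_twins_eq (hk : ∀ u, (G.twins u).ncard = k) :
    k ∣ Nat.card V := by
  rw [← Set.ncard_univ]
  refine Set.dvd_ncard_of_forall_ncard_fiber_eq (f := G.neighborSet) (Set.toFinite _) fun u _ ↦ ?_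
  rw [← hk u, Set.sep_univ]
  rfl

end SimpleGraph

theorem no_triple_twins_general {V : Type*} [Fintype V] (G : SimpleGraph V)
    (hvt : ∀ x y : V, ∃ φ : G ≃g G, φ x = y)
    (hreg : ∀ v : V, (G.neighborSet v).ncard = 4)
    (hodd : Odd (Fintype.card V)) :
    ¬ ∃ x y z : V, x ≠ y ∧ x ≠ z ∧ y ≠ z ∧
      G.neighborSet x = G.neighborSet y ∧ G.neighborSet y = G.neighborSet z := by
  rintro ⟨x, y, z, hxy, hxz, hyz, hNxy, hNyz⟩
  set k := (G.twins x).ncard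
  have hk : ∀ u, (G.twins u).ncard = k := fun u ↦ ncard_twins_eq_of_forall_exists_iso hvt u x
  have hk4 : k ∣ 4 := hreg x ▸ dvd_ncard_neighborSet_of_forall_ncard_twins_eq hk x
  have hk_odd : Odd k := hodd.of_dvd_nat <|
    Nat.card_eq_fintype_card (α := V) ▸ dvd_card_of_forall_ncard_twins_eq hk
  have hk3 : 3 ≤ k := by
    have hxyz : ({x, y, z} : Set V) ⊆ G.twins x := by
      rintro w (rfl | rfl | rfl)
      exacts [rfl, hNxy.symm, (hNxy.trans hNyz).symm]
    calc 3 = ({x, y, z} : Set V).ncard :=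
          (Set.ncard_eq_three.mpr ⟨x, y, z, hxy, hxz, hyz, rfl⟩).symm
      _ ≤ k := Set.ncard_le_ncard hxyz (Set.toFinite _)
  have hk_le : k ≤ 4 := Nat.le_of_dvd (by norm_num) hk4
  rw [Nat.odd_iff] at hk_odd
  interval_cases k <;> omega

/-- A connected 4-regular vertex-transitive odd graph has no three pairwise distinct vertices
`x`, `y`, `z` with `N(x) = N(y) = N(z)`. -/
theorem no_triple_twins {V : Type*} [Fintype V] (G : SimpleGraph V)
    (hconn : G.Connected)
    (hvt : ∀ x y : V, ∃ φ : G ≃g G, φ x = y)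
    (hreg : ∀ v : V, (G.neighborSet v).ncard = 4)
    (hodd : Odd (Fintype.card V)) :
    ¬ ∃ x y z : V, x ≠ y ∧ x ≠ z ∧ y ≠ z ∧
      G.neighborSet x = G.neighborSet y ∧ G.neighborSet y = G.neighborSet z :=
  no_triple_twins_general G hvt hreg hodd
end
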